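/- Let u ∈ C²(ℝ^N) ∩ H¹_γ(ℝ^N) be a weak solution to −Δ_γ u + u = (d^{-μ} * |u|^p)|u|^{p-2}u satisfying both the energy identity ∫|∇_γ u|² + ∫|u|² = ∫(d^{-μ}*|u|^p)|u|^p and the Pohožaev identity ((N_γ−2)/2)∫|∇_γ u|² + (N_γ/2)∫|u|² = ((2N_γ−μ)/(2p))∫(d^{-μ}*|u|^p)|u|^p. If u is nontrivial (∫|∇_γ u|² + ∫|u|² > 0), then (N_γ−2)/(2N_γ−μ) < 1/p < N_γ/(2N_γ−μ). -/
import Mathlib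


/-- Energy + Pohožaev identities force the exponent condition on p for a nontrivial
solution (with A = ∫|∇_γ u|² > 0 and B = ∫|u|² > 0). -/
theorem pohozaev_forces_exponent (m l : ℕ) (hm : 1 ≤ m) (hl : 1 ≤ l)
    (γ : ℝ) (hγ : 0 ≤ γ) (Nγ : ℝ) (hNγ : Nγ = m + (1 + γ) * l) (hN2 : 2 < Nγ)
    (μ p : ℝ) (hμ0 : 0 < μ) (hμN : μ < Nγ) (hp : 1 < p)
    (A B C : ℝ) (hA : 0 < A) (hB : 0 < B)
    (henergy : A + B = C)
    (hPoh : ((Nγ - 2) / 2) * A + (Nγ / 2) * B = ((2 * Nγ - μ) / (2 * p)) * C) :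
    (Nγ - 2) / (2 * Nγ - μ) < 1 / p ∧ 1 / p < Nγ / (2 * Nγ - μ) := by
  have hp0 : (0:ℝ) < p := by linarith
  have hden : (0:ℝ) < 2 * Nγ - μ := by linarith
  have hkey : (Nγ - 2) * p * A + Nγ * p * B = (2 * Nγ - μ) * (A + B) := by
    have h := hPoh
    field_simp at h
    subst henergy
    linarith [h]
  constructor
  · rw [div_lt_div_iff₀ hden hp0]
    nlinarith [hkey, hB, hp0]
  · rw [div_lt_div_iff₀ hp0 hden]
    nlinarith [hkey, hA, hp0]
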